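/- arXiv:1903.02998 — 5 statements merged into one kernel-verified Lean document; each statement's English description precedes it below -/
import Mathlib

section
/- Let d ≥ 1 and let F ⊆ binom(ℕ,d) be a finite compressed family of d-sets. Then for every family F' ⊆ binom(ℕ,d) with |F'| = |F| one has |Inc(F')| ≥ |Inc(F)|. (Compressed sets minimize the cardinality of the Inc-image among all families of the same size.) -/
def Inc1 : Set (ℕ → ℕ) := {π | StrictMono π ∧ ∀ j, π j ≤ j + 1}

def incF (F : Set (Finset ℕ)) : Set (Finset ℕ) :=
  {v | ∃ u ∈ F, ∃ π ∈ Inc1, v = u.image π}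

def compressionIn (A : Set ℕ) (d n : ℕ) : Set (Finset ℕ) :=
  {v | ↑v ⊆ A ∧ v.card = d ∧
    {w : Finset ℕ | ↑w ⊆ A ∧ w.card = d ∧ toColex w ≤ toColex v}.ncard ≤ n}

def IsCompressedIn (A : Set ℕ) (d : ℕ) (F : Set (Finset ℕ)) : Prop :=
  (∀ u ∈ F, ↑u ⊆ A ∧ u.card = d) ∧
  ∀ u ∈ F, ∀ v : Finset ℕ, ↑v ⊆ A → v.card = d → toColex v ≤ toColex u → v ∈ F

def hatL (F : Set (Finset ℕ)) (k : ℕ) : Set (Finset ℕ) :=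
  {u | (∀ x ∈ u, k < x) ∧ insert k u ∈ F}

def hatR (F : Set (Finset ℕ)) (k : ℕ) : Set (Finset ℕ) :=
  {u | (∀ x ∈ u, x < k) ∧ insert k u ∈ F}

def leftComp (d : ℕ) (F : Set (Finset ℕ)) : Set (Finset ℕ) :=
  ⋃ k : ℕ, {v | ∃ w ∈ compressionIn {j | k < j} (d - 1) (hatL F k).ncard, v = insert k w}

def rightComp (d : ℕ) (F : Set (Finset ℕ)) : Set (Finset ℕ) :=
  ⋃ k : ℕ, {v | ∃ w ∈ compressionIn Set.univ (d - 1) (hatR F k).ncard, v = insert k w}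

def BorelLE (u v : Finset ℕ) : Prop :=
  List.Forall₂ (· ≤ ·) (u.sort (· ≤ ·)) (v.sort (· ≤ ·))

def IsShifted (F : Set (Finset ℕ)) : Prop :=
  ∀ u ∈ F, ∀ v, BorelLE v u → v ∈ F

def piShift (i : ℕ) : ℕ → ℕ := fun j => if j < i then j else j + 1

def IsBinRep (d m s : ℕ) (a : ℕ → ℕ) : Prop :=
  1 ≤ s ∧ s ≤ d ∧ (∀ i, s ≤ i → i < d → a i < a (i + 1)) ∧ s ≤ a s ∧
    m = ∑ i ∈ Finset.Icc s d, Nat.choose (a i) i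

def famLE (F G : Set (Finset ℕ)) : Prop :=
  F = G ∨ ∃ m ∈ G, m ∉ F ∧
    ∀ w : Finset ℕ, (w ∈ F ∧ w ∉ G) ∨ (w ∈ G ∧ w ∉ F) → toColex w ≤ toColex m

def IsSimplicialComplex (Δ : Set (Finset ℕ)) : Prop :=
  Δ.Finite ∧ ∀ F ∈ Δ, ∀ G ⊆ F, G ∈ Δ

/-!
Let `n` be the largest element occurring in a family `A` of `(d + 1)`-sets. A map `π ∈ Inc₁`
satisfies `j ≤ π j ≤ j + 1`, and if it fixes `n` it fixes all of `[0, n]`. Hence `Inc(A)` splits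
exactly into the sets with top element `≤ n`, namely `Inc(A_{<n}) ∪ A_{=n}`, and the sets with top
element `n + 1`, which correspond bijectively to `Inc` of the link `{u \ {n} : u ∈ A, max u = n}`,
a family of `d`-sets.

If `A` is compressed, `A_{<n}` consists of all `(d + 1)`-subsets of `[0, n)` and the link is again
compressed, so induction on `d` gives `|Inc(A)| ≤ incBound (d + 1) |A|`, where
`incBound (d + 1) (C(T, d + 1) + r) = C(T + 1, d + 1) + incBound d r`. For an arbitrary family the
splitting gives `|Inc(A)| ≥ max (|Inc(A_{<n})|, |A|) + |Inc(link)|`, and induction on `d` and on `A`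
reduces `|Inc(A)| ≥ incBound (d + 1) |A|` to the numerical inequality
`incBound (d + 1) (m + k) ≤ max (incBound (d + 1) m, m + k) + incBound d k`. That inequality is
proved by induction on `d`, from the subadditivity of `incBound d` and the fact that among windows
of a fixed length, `incBound d` grows least on one that ends at a binomial coefficient `C(T, d)`.
-/

namespace Inc

open Finset

lemma le_of_choose_pos {n k : ℕ} (h : 0 < n.choose k) : k ≤ n :=
  not_lt.1 fun h' => by simp [Nat.choose_eq_zero_of_lt h'] at h

lemma succ_le_choose_add (d j : ℕ) : j + 1 ≤ (d + 1 + j).choose (d + 1) := by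
  induction j with
  | zero => simp
  | succ j ih =>
    rw [← add_assoc, Nat.choose_succ_succ']
    have := Nat.choose_pos (show d ≤ d + 1 + j by omega)
    omega

def level (d m : ℕ) : ℕ := Nat.findGreatest (fun n => n.choose (d + 1) < m) (m + d)

/-- `incBound d m` is `|Inc|` of the first `m` sets of `binom(ℕ, d)` in colex. If
`m = C(T, d + 1) + r` with `0 < r ≤ C(T, d)`, the first `m` sets of `binom(ℕ, d + 1)` are the
subsets of `[0, T)` and `r` sets with top element `T`; their `Inc` consists of the
`C(T + 1, d + 1)` subsets of `[0, T]` and `incBound d r` sets with top element `T + 1`. -/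
def incBound : ℕ → ℕ → ℕ
  | 0, m => min m 1
  | d + 1, m => if m = 0 then 0 else
      (level d m + 1).choose (d + 1) + incBound d (m - (level d m).choose (d + 1))

lemma level_spec {d m : ℕ} (hm : 0 < m) :
    (level d m).choose (d + 1) < m ∧ m ≤ (level d m + 1).choose (d + 1) := by
  have hd : d.choose (d + 1) < m := by rwa [Nat.choose_eq_zero_of_lt (Nat.lt_succ_self d)]
  refine ⟨Nat.findGreatest_spec (P := fun n => n.choose (d + 1) < m) (m := d) (by omega) hd, ?_⟩
  by_cases htop : level d m < m + d
  · exact not_lt.1 (Nat.findGreatest_is_greatest (P := fun n => n.choose (d + 1) < m) (n := m + d)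
      (Nat.lt_succ_self (level d m)) htop)
  · have hlevel : level d m = m + d := le_antisymm (Nat.findGreatest_le _) (not_lt.1 htop)
    have := succ_le_choose_add d m
    rw [hlevel, show m + d + 1 = d + 1 + m by omega]
    omega

lemma level_eq {d m S : ℕ} (h₁ : S.choose (d + 1) < m) (h₂ : m ≤ (S + 1).choose (d + 1)) :
    level d m = S := by
  have hS : S ≤ m + d := by
    by_contra! h
    have := (succ_le_choose_add d m).trans
      (Nat.choose_le_choose (d + 1) (show d + 1 + m ≤ S by omega))
    omega
  rw [level, Nat.findGreatest_eq_iff]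
  exact ⟨hS, fun _ => h₁, fun k hk _ => not_lt.2 (h₂.trans (Nat.choose_le_choose _ hk))⟩

lemma exists_eq_choose_add {d m : ℕ} (hm : 0 < m) :
    ∃ T r : ℕ, 0 < r ∧ r ≤ T.choose d ∧ m = T.choose (d + 1) + r := by
  obtain ⟨h₁, h₂⟩ := level_spec (d := d) hm
  rw [Nat.choose_succ_succ'] at h₂
  exact ⟨level d m, m - (level d m).choose (d + 1), by omega, by omega, by omega⟩

@[simp] lemma incBound_zero_right (d : ℕ) : incBound d 0 = 0 := by
  cases d <;> simp [incBound]

lemma incBound_zero_left (m : ℕ) : incBound 0 m = min m 1 := rfl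

lemma incBound_succ_choose_add_of_pos {d T r : ℕ} (hr₀ : 0 < r) (hr : r ≤ T.choose d) :
    incBound (d + 1) (T.choose (d + 1) + r) = (T + 1).choose (d + 1) + incBound d r := by
  have hlevel : level d (T.choose (d + 1) + r) = T :=
    level_eq (by omega) (by rw [Nat.choose_succ_succ']; omega)
  rw [incBound, if_neg (by omega), hlevel, Nat.add_sub_cancel_left]

lemma incBound_choose {d T : ℕ} (h : d ≤ T) : incBound d (T.choose d) = (T + 1).choose d := by
  induction d generalizing T with
  | zero => simp [incBound]
  | succ d ih =>
    obtain ⟨S, rfl⟩ : ∃ S, T = S + 1 := ⟨T - 1, by omega⟩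
    rw [Nat.choose_succ_succ' S d, add_comm (S.choose d),
      incBound_succ_choose_add_of_pos (Nat.choose_pos (by omega)) le_rfl, ih (by omega),
      add_comm, ← Nat.choose_succ_succ']

lemma incBound_succ_choose_add {d T r : ℕ} (hr : r ≤ T.choose d)
    (hm : 0 < T.choose (d + 1) + r) :
    incBound (d + 1) (T.choose (d + 1) + r) = (T + 1).choose (d + 1) + incBound d r := by
  rcases Nat.eq_zero_or_pos r with rfl | hr₀
  · simp [incBound_choose (le_of_choose_pos hm)]
  · exact incBound_succ_choose_add_of_pos hr₀ hr

lemma incBound_succ_eq_of_le {d T m : ℕ} (h₁ : T.choose (d + 1) ≤ m)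
    (h₂ : m ≤ (T + 1).choose (d + 1)) (hm : 0 < m) :
    incBound (d + 1) m = (T + 1).choose (d + 1) + incBound d (m - T.choose (d + 1)) := by
  have hP := Nat.choose_succ_succ' T d
  have h := incBound_succ_choose_add (d := d) (T := T) (r := m - T.choose (d + 1)) (by omega)
    (by omega)
  rwa [Nat.add_sub_cancel' h₁] at h

lemma incBound_one_right (d : ℕ) : incBound d 1 = d + 1 := by
  induction d with
  | zero => rfl
  | succ d ih =>
    have h := incBound_succ_choose_add_of_pos (d := d) (T := d) one_pos (by simp)
    rw [Nat.choose_eq_zero_of_lt (Nat.lt_succ_self d), zero_add, ih, Nat.choose_self] at h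
    omega

lemma incBound_one_left {m : ℕ} (hm : 0 < m) : incBound 1 m = m + 1 := by
  obtain ⟨k, rfl⟩ := Nat.exists_eq_add_one_of_ne_zero hm.ne'
  have h := incBound_succ_choose_add_of_pos (d := 0) (T := k) one_pos (by simp)
  rwa [Nat.choose_one_right, Nat.choose_one_right, incBound_one_right] at h

lemma incBound_lt_incBound_add_one (d m : ℕ) : incBound (d + 1) m < incBound (d + 1) (m + 1) := by
  induction d generalizing m with
  | zero =>
    rcases Nat.eq_zero_or_pos m with rfl | hm
    · simp [incBound_one_right]
    · rw [incBound_one_left hm, incBound_one_left (Nat.succ_pos m)]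
      omega
  | succ d ih =>
    rcases Nat.eq_zero_or_pos m with rfl | hm
    · simp [incBound_one_right]
    obtain ⟨T, r, hr₀, hrT, rfl⟩ := exists_eq_choose_add (d := d + 1) hm
    rw [incBound_succ_choose_add_of_pos hr₀ hrT]
    rcases hrT.lt_or_eq with hrT | rfl
    · have h := incBound_succ_choose_add_of_pos (by omega : 0 < r + 1) hrT
      rw [← add_assoc] at h
      rw [h]
      exact Nat.add_lt_add_left (ih r) _
    · have hT : d + 1 ≤ T := le_of_choose_pos hr₀
      have hP : T.choose (d + 1 + 1) + T.choose (d + 1) = (T + 1).choose (d + 1 + 1) := by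
        rw [Nat.choose_succ_succ' T (d + 1), add_comm]
      have h₁ := incBound_succ_choose_add_of_pos (d := d + 1) (T := T + 1) one_pos
        (Nat.choose_pos (by omega))
      rw [hP, incBound_choose hT, h₁, Nat.choose_succ_succ' (T + 1) (d + 1), incBound_one_right]
      omega

lemma strictMono_incBound (d : ℕ) : StrictMono (incBound (d + 1)) :=
  strictMono_nat_of_lt_succ (incBound_lt_incBound_add_one d)

lemma monotone_incBound (d : ℕ) : Monotone (incBound d) := by
  cases d with
  | zero => exact fun a b h => min_le_min_right 1 h
  | succ d => exact (strictMono_incBound d).monotone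

lemma le_incBound (d m : ℕ) : m ≤ incBound (d + 1) m := (strictMono_incBound d).id_le m

def IncBoundSubadditive (d : ℕ) : Prop :=
  ∀ x y, incBound d (x + y) ≤ incBound d x + incBound d y

/-- The increment of `incBound d` over a window of length `L` that ends at a binomial coefficient
`C(T, d)` is at most its increment over any window of length `L` ending no later (stated
additively, to avoid truncated subtraction). -/
def IncBoundWindow (d L : ℕ) : Prop :=
  ∀ x y T : ℕ, x + L = T.choose d → y + L ≤ T.choose d →
    incBound d (x + L) + incBound d y ≤ incBound d (y + L) + incBound d x

lemma incBound_choose_le {d : ℕ} (hS : IncBoundSubadditive d) (S : ℕ) :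
    incBound d (S.choose (d + 1)) ≤ (S + 1).choose (d + 1) := by
  induction S with
  | zero => simp
  | succ S ih =>
    have hfull : incBound d (S.choose d) ≤ (S + 1).choose d := by
      by_cases hSd : d ≤ S
      · rw [incBound_choose hSd]
      · simp [Nat.choose_eq_zero_of_lt (not_le.1 hSd)]
    have := hS (S.choose d) (S.choose (d + 1))
    rw [Nat.choose_succ_succ' S d, Nat.choose_succ_succ' (S + 1) d]
    omega

lemma incBound_le_incBound_succ {d : ℕ} (hS : IncBoundSubadditive d) (z : ℕ) :
    incBound d z ≤ incBound (d + 1) z := by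
  rcases Nat.eq_zero_or_pos z with rfl | hz
  · simp
  obtain ⟨S, r, hr₀, hrS, rfl⟩ := exists_eq_choose_add (d := d) hz
  rw [incBound_succ_choose_add_of_pos hr₀ hrS]
  have := hS (S.choose (d + 1)) r
  have := incBound_choose_le hS S
  omega

lemma incBoundWindow_zero (L : ℕ) : IncBoundWindow 0 L := by
  intro x y T hx hy
  rw [Nat.choose_zero_right] at hx hy
  simp only [incBound_zero_left]
  omega

lemma incBoundSubadditive_zero : IncBoundSubadditive 0 := by
  intro x y
  simp only [incBound_zero_left]
  omega

lemma incBoundWindow_succ_of_le_choose {d L : ℕ} (hW : ∀ L, IncBoundWindow d L)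
    (hS : IncBoundSubadditive d) (ih : ∀ L' < L, IncBoundWindow (d + 1) L') {x y T : ℕ}
    (hx : x + L = (T + 1).choose (d + 1)) (hy : y + L ≤ (T + 1).choose (d + 1))
    (hL : 0 < L) (hLT : L ≤ T.choose d) :
    incBound (d + 1) (x + L) + incBound (d + 1) y ≤
      incBound (d + 1) (y + L) + incBound (d + 1) x := by
  have hP := Nat.choose_succ_succ' T d
  rcases Nat.eq_zero_or_pos x with rfl | hx₀
  · obtain rfl : y = 0 := by omega
    rfl
  rw [incBound_succ_eq_of_le (T := T) (m := x) (by omega) (by omega) hx₀,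
    incBound_succ_eq_of_le (T := T) (m := x + L) (by omega) (by omega) (by omega),
    show x + L - T.choose (d + 1) = T.choose d by omega]
  obtain ⟨S, z, hz₀, hzS, hyL⟩ := exists_eq_choose_add (d := d) (m := y + L) (by omega)
  have hST : S < T + 1 :=
    (Nat.choose_mono (d + 1)).reflect_lt (show S.choose (d + 1) < (T + 1).choose (d + 1) by omega)
  rw [hyL, incBound_succ_choose_add_of_pos hz₀ hzS]
  have hPS := Nat.choose_succ_succ' S d
  by_cases hy : S.choose (d + 1) ≤ y
  · -- the window `[y, y + L]` lies inside the block of `S`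
    have hGy : incBound (d + 1) y ≤ (S + 1).choose (d + 1) + incBound d (y - S.choose (d + 1)) := by
      rcases Nat.eq_zero_or_pos y with rfl | hy₀
      · simp
      · rw [incBound_succ_eq_of_le hy (by omega) hy₀]
    have hw := hW L (x - T.choose (d + 1)) (y - S.choose (d + 1)) T (by omega)
      (by have := Nat.choose_le_choose d (show S ≤ T by omega); omega)
    rw [show x - T.choose (d + 1) + L = T.choose d by omega,
      show y - S.choose (d + 1) + L = z by omega] at hw
    omega
  · -- split the window at `C(S, d + 1)`
    push Not at hy
    have hS₁ := le_of_choose_pos (show 0 < S.choose (d + 1) by omega)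
    have h := ih (S.choose (d + 1) - y) (by omega) (x + z) y (T + 1) (by omega)
      (by have := Nat.choose_le_choose (d + 1) hST.le; omega)
    rw [show x + z + (S.choose (d + 1) - y) = x + L by omega,
      show y + (S.choose (d + 1) - y) = S.choose (d + 1) by omega, incBound_choose hS₁,
      incBound_succ_eq_of_le (T := T) (m := x + L) (by omega) (by omega) (by omega),
      incBound_succ_eq_of_le (T := T) (m := x + z) (by omega) (by omega) (by omega),
      show x + L - T.choose (d + 1) = T.choose d by omega] at h
    have := hS (x - T.choose (d + 1)) z
    rw [show x - T.choose (d + 1) + z = x + z - T.choose (d + 1) by omega] at this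
    omega

lemma incBoundWindow_succ {d : ℕ} (hW : ∀ L, IncBoundWindow d L) (hS : IncBoundSubadditive d)
    (L : ℕ) : IncBoundWindow (d + 1) L := by
  induction L using Nat.strong_induction_on with
  | _ L ih =>
  intro x y T hx hy
  rcases Nat.eq_zero_or_pos L with rfl | hL
  · simp only [add_zero]
    omega
  have hT := le_of_choose_pos (show 0 < T.choose (d + 1) by omega)
  obtain ⟨T, rfl⟩ : ∃ S, T = S + 1 := ⟨T - 1, by omega⟩
  by_cases hLT : L ≤ T.choose d
  · exact incBoundWindow_succ_of_le_choose hW hS ih hx hy hL hLT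
  -- split the window at `C(T, d + 1)`
  push Not at hLT
  have hP := Nat.choose_succ_succ' T d
  have hw₀ : 0 < T.choose d := Nat.choose_pos (by omega)
  have h₁ := ih (T.choose d) hLT (T.choose (d + 1)) (y + L - T.choose d) (T + 1)
    (by omega) (by omega)
  have h₂ := ih (L - T.choose d) (by omega) x y T (by omega) (by omega)
  rw [show T.choose (d + 1) + T.choose d = x + L by omega,
    show y + L - T.choose d + T.choose d = y + L by omega] at h₁
  rw [show x + (L - T.choose d) = T.choose (d + 1) by omega,
    show y + (L - T.choose d) = y + L - T.choose d by omega] at h₂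
  omega

lemma IncBoundSubadditive.succ {d : ℕ} (hS : IncBoundSubadditive d)
    (hW : ∀ L, IncBoundWindow (d + 1) L) : IncBoundSubadditive (d + 1) := by
  have hmono := incBound_le_incBound_succ hS
  suffices key : ∀ x y, y ≤ x →
      incBound (d + 1) (x + y) ≤ incBound (d + 1) x + incBound (d + 1) y by
    intro x y
    rcases le_total y x with h | h
    · exact key x y h
    · rw [add_comm x, add_comm (incBound (d + 1) x)]
      exact key y x h
  intro x y hyx
  rcases Nat.eq_zero_or_pos y with rfl | hy₀
  · simp
  obtain ⟨T, R, hR₀, hRT, hxy⟩ := exists_eq_choose_add (d := d) (m := x + y) (by omega)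
  rw [hxy, incBound_succ_choose_add_of_pos hR₀ hRT]
  by_cases hx : x ≤ T.choose (d + 1)
  · have hT := le_of_choose_pos (show 0 < T.choose (d + 1) by omega)
    have hw := hW (y - R) x R T (by omega) (by omega)
    rw [show x + (y - R) = T.choose (d + 1) by omega, show R + (y - R) = y by omega,
      incBound_choose hT] at hw
    have := hmono R
    omega
  · have hP := Nat.choose_succ_succ' T d
    rw [incBound_succ_eq_of_le (T := T) (m := x) (by omega) (by omega) (by omega)]
    have := hS (x - T.choose (d + 1)) y
    rw [show x - T.choose (d + 1) + y = R by omega] at this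
    have := hmono y
    omega

theorem incBoundWindow_and_subadditive (d : ℕ) :
    (∀ L, IncBoundWindow d L) ∧ IncBoundSubadditive d := by
  induction d with
  | zero => exact ⟨incBoundWindow_zero, incBoundSubadditive_zero⟩
  | succ d ih =>
    have hW := incBoundWindow_succ ih.1 ih.2
    exact ⟨hW, ih.2.succ hW⟩

lemma incBound_one_add_le_max (m k : ℕ) :
    incBound 1 (m + k) ≤ max (incBound 1 m) (m + k) + incBound 0 k := by
  rcases Nat.eq_zero_or_pos k with rfl | hk
  · simp
  rw [incBound_one_left (by omega), incBound_zero_left]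
  omega

section AddLeMaxStep

variable {d m k : ℕ}
  (ih : ∀ m k, incBound (d + 1) (m + k) ≤ max (incBound (d + 1) m) (m + k) + incBound d k)
include ih

lemma incBound_add_le_of_le_add (h : incBound (d + 2) m ≤ m + k) :
    incBound (d + 2) (m + k) ≤ m + k + incBound (d + 1) k := by
  change incBound (d + 1 + 1) m ≤ m + k at h
  change incBound (d + 1 + 1) (m + k) ≤ m + k + incBound (d + 1) k
  rcases Nat.eq_zero_or_pos k with rfl | hk
  · simpa using h
  obtain ⟨T, R, hR₀, hRT, hmk⟩ := exists_eq_choose_add (d := d + 1) (m := m + k) (by omega)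
  have hP := Nat.choose_succ_succ' T (d + 1)
  rw [hmk, incBound_succ_choose_add_of_pos hR₀ hRT]
  by_cases hwk : T.choose (d + 1) ≤ k
  · have h₁ := (strictMono_incBound d).add_le_nat (T.choose (d + 1) - R) R
    rw [Nat.sub_add_cancel hRT] at h₁
    have h₂ := monotone_incBound (d + 1) hwk
    omega
  push Not at hwk
  have hm : m ≤ T.choose (d + 1 + 1) := by
    by_contra! hm
    rw [incBound_succ_eq_of_le (T := T) (m := m) (by omega) (by omega) (by omega)] at h
    have := le_incBound d (m - T.choose (d + 1 + 1))
    omega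
  have hT := le_of_choose_pos (show 0 < T.choose (d + 1) by omega)
  obtain ⟨S, rfl⟩ : ∃ S, T = S + 1 := ⟨T - 1, by omega⟩
  have hP₁ := Nat.choose_succ_succ' S (d + 1)
  have hP₂ := Nat.choose_succ_succ' S d
  -- write `m = C(S, d + 2) + r'`, with `r' = 0` if `m` lies below that block
  set r' := m - S.choose (d + 1 + 1) with hr'def
  have hr' : incBound (d + 1) r' ≤ R := by
    rcases Nat.eq_zero_or_pos r' with h0 | hr'₀
    · simp [h0]
    rw [incBound_succ_eq_of_le (T := S) (m := m) (by omega) (by omega) (by omega), ← hr'def] at h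
    omega
  have hr'R := (le_incBound d r').trans hr'
  rw [incBound_succ_eq_of_le (T := S) (m := k) (by omega) (by omega) hk]
  have hih := ih r' (R - r')
  rw [Nat.add_sub_cancel' hr'R, max_eq_right hr'] at hih
  have := monotone_incBound d (show R - r' ≤ k - S.choose (d + 1) by omega)
  omega

lemma incBound_add_le_of_add_lt (h : m + k < incBound (d + 2) m) :
    incBound (d + 2) (m + k) ≤ incBound (d + 2) m + incBound (d + 1) k := by
  change m + k < incBound (d + 1 + 1) m at h
  change incBound (d + 1 + 1) (m + k) ≤ incBound (d + 1 + 1) m + incBound (d + 1) k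
  obtain ⟨hW, hS⟩ := incBoundWindow_and_subadditive (d + 1)
  rcases Nat.eq_zero_or_pos m with rfl | hm
  · simp at h
  obtain ⟨T, r, hr₀, hrT, rfl⟩ := exists_eq_choose_add (d := d + 1) hm
  have hP := Nat.choose_succ_succ' T (d + 1)
  rw [incBound_succ_choose_add_of_pos hr₀ hrT] at h ⊢
  by_cases hsame : r + k ≤ T.choose (d + 1)
  · rw [add_assoc (T.choose (d + 1 + 1)), incBound_succ_choose_add_of_pos (by omega) hsame]
    have := hS r k
    omega
  push Not at hsame
  have hT := le_of_choose_pos (show 0 < T.choose (d + 1) by omega)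
  have hgap := (strictMono_incBound d).add_le_nat (T.choose (d + 1) - r) r
  rw [Nat.sub_add_cancel hrT, incBound_choose hT] at hgap
  have hP₁ := Nat.choose_succ_succ' T d
  have hP₂ := Nat.choose_succ_succ' (T + 1) (d + 1)
  rw [incBound_succ_eq_of_le (T := T + 1) (by omega) (by omega) (by omega)]
  set z := T.choose (d + 1 + 1) + r + k - (T + 1).choose (d + 1 + 1)
  by_cases hrz : r ≤ z
  · -- `k` covers the rest of the block of `T`, and `z - r` more
    rw [incBound_succ_eq_of_le (T := T) (m := k) (by omega) (by omega) (by omega)]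
    have hih := ih r (z - r)
    rw [Nat.add_sub_cancel' hrz, max_eq_left (by omega),
      show z - r = k - T.choose (d + 1) by omega] at hih
    omega
  · push Not at hrz
    have hw := hW (T.choose (d + 1) - r) r z T (by omega) (by omega)
    rw [Nat.add_sub_cancel' hrT, show z + (T.choose (d + 1) - r) = k by omega,
      incBound_choose hT] at hw
    omega

end AddLeMaxStep

theorem incBound_add_le_max (d m k : ℕ) :
    incBound (d + 1) (m + k) ≤ max (incBound (d + 1) m) (m + k) + incBound d k := by
  induction d generalizing m k with
  | zero => exact incBound_one_add_le_max m k
  | succ d ih =>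
    rcases le_or_gt (incBound (d + 2) m) (m + k) with h | h
    · have : incBound (d + 1 + 1) (m + k) ≤ m + k + incBound (d + 1) k :=
        incBound_add_le_of_le_add ih h
      omega
    · have : incBound (d + 1 + 1) (m + k) ≤ incBound (d + 1 + 1) m + incBound (d + 1) k :=
        incBound_add_le_of_add_lt ih h
      omega

lemma sup_id_mem {s : Finset ℕ} (hs : s.Nonempty) : s.sup id ∈ s := by
  obtain ⟨a, ha, h⟩ := s.exists_mem_eq_sup hs id
  exact h ▸ ha

section Inc1

variable {π : ℕ → ℕ} (hπ : π ∈ Inc1)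
include hπ

lemma le_apply_of_mem_Inc1 (j : ℕ) : j ≤ π j := hπ.1.id_le j

lemma apply_eq_self_of_mem_Inc1 {j n : ℕ} (hn : π n = n) (hj : j ≤ n) : π j = j := by
  have := hπ.1.add_le_nat (n - j) j
  rw [Nat.sub_add_cancel hj] at this
  have := le_apply_of_mem_Inc1 hπ j
  omega

lemma sup_image_of_mem_Inc1 {u : Finset ℕ} (hu : u.Nonempty) :
    (u.image π).sup id = π (u.sup id) := by
  refine le_antisymm (Finset.sup_le fun _ hx => ?_)
    (le_sup (f := id) (mem_image_of_mem π (sup_id_mem hu)))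
  obtain ⟨j, hj, rfl⟩ := mem_image.1 hx
  exact hπ.1.monotone (le_sup (f := id) hj)

lemma card_image_of_mem_Inc1 (u : Finset ℕ) : #(u.image π) = #u :=
  card_image_of_injective u hπ.1.injective

lemma extend_mem_Inc1 (n : ℕ) : (fun j => if j < n then π j else j + 1) ∈ Inc1 := by
  refine ⟨fun a b hab => ?_, fun j => ?_⟩
  · have := hπ.2 a
    have := hπ.1 hab
    dsimp only
    split_ifs <;> omega
  · have := hπ.2 j
    dsimp only
    split_ifs <;> omega

end Inc1

lemma id_mem_Inc1 : id ∈ Inc1 := ⟨strictMono_id, fun j => Nat.le_succ j⟩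

lemma incF_finite (A : Finset (Finset ℕ)) : (incF ↑A).Finite := by
  refine (A.biUnion fun u => (range (u.sup id + 2)).powerset).finite_toSet.subset ?_
  rintro _ ⟨u, hu, π, hπ, rfl⟩
  refine mem_coe.2 (mem_biUnion.2 ⟨u, hu, mem_powerset.2 fun x hx => ?_⟩)
  obtain ⟨j, hj, rfl⟩ := mem_image.1 hx
  have := hπ.2 j
  have := le_sup (f := id) hj
  simp only [id, mem_range] at *
  omega

noncomputable def incFinset (A : Finset (Finset ℕ)) : Finset (Finset ℕ) := (incF_finite A).toFinset

lemma coe_incFinset (A : Finset (Finset ℕ)) : (incFinset A : Set (Finset ℕ)) = incF ↑A :=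
  Set.Finite.coe_toFinset _

lemma mem_incFinset {A : Finset (Finset ℕ)} {v : Finset ℕ} :
    v ∈ incFinset A ↔ ∃ u ∈ A, ∃ π ∈ Inc1, v = u.image π := by
  simp [incFinset, incF]

lemma subset_incFinset (A : Finset (Finset ℕ)) : A ⊆ incFinset A :=
  fun u hu => mem_incFinset.2 ⟨u, hu, id, id_mem_Inc1, image_id.symm⟩

lemma le_of_mem_incFinset {A : Finset (Finset ℕ)} {n : ℕ} (hA : ∀ u ∈ A, ∀ j ∈ u, j < n)
    {v : Finset ℕ} (hv : v ∈ incFinset A) : ∀ x ∈ v, x ≤ n := by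
  obtain ⟨u, hu, π, hπ, rfl⟩ := mem_incFinset.1 hv
  intro x hx
  obtain ⟨j, hj, rfl⟩ := mem_image.1 hx
  have := hπ.2 j
  have := hA u hu j hj
  omega

def topLink (A : Finset (Finset ℕ)) (n : ℕ) : Finset (Finset ℕ) :=
  (A.filter (·.sup id = n)).image (·.erase n)

lemma lt_of_mem_topLink {A : Finset (Finset ℕ)} {n : ℕ} {w : Finset ℕ} (hw : w ∈ topLink A n) :
    ∀ x ∈ w, x < n := by
  obtain ⟨u, hu, rfl⟩ := mem_image.1 hw
  intro x hx
  have h₁ : x ≤ u.sup id := le_sup (f := id) (mem_of_mem_erase hx)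
  have h₂ := ne_of_mem_erase hx
  have h₃ := (mem_filter.1 hu).2
  omega

section Decomposition

variable {A : Finset (Finset ℕ)} {n : ℕ} (hA : ∀ u ∈ A, u.Nonempty ∧ u.sup id ≤ n)
include hA

lemma card_eq_card_filter_add_card_topLink :
    #A = #(A.filter (·.sup id < n)) + #(topLink A n) := by
  rw [topLink, card_image_of_injOn, ← card_filter_add_card_filter_not (s := A) (·.sup id < n)]
  · congr 2
    ext u
    simp only [mem_filter, not_lt]
    exact ⟨fun h => ⟨h.1, le_antisymm (hA u h.1).2 h.2⟩, fun h => ⟨h.1, h.2.ge⟩⟩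
  · intro u hu v hv huv
    simp only [coe_filter, Set.mem_ofPred_eq] at hu hv
    have hun : n ∈ u := hu.2 ▸ sup_id_mem (hA u hu.1).1
    have hvn : n ∈ v := hv.2 ▸ sup_id_mem (hA v hv.1).1
    rw [← insert_erase hun, ← insert_erase hvn]
    exact congrArg (insert n) huv

lemma filter_incFinset_sup_le :
    (incFinset A).filter (·.sup id ≤ n) =
      incFinset (A.filter (·.sup id < n)) ∪ A.filter (·.sup id = n) := by
  ext v
  simp only [mem_filter, mem_union, mem_incFinset]
  constructor
  · rintro ⟨⟨u, hu, π, hπ, rfl⟩, hv⟩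
    obtain ⟨hu₀, hun⟩ := hA u hu
    rw [sup_image_of_mem_Inc1 hπ hu₀] at hv
    rcases hun.lt_or_eq with hlt | heq
    · exact Or.inl ⟨u, ⟨hu, hlt⟩, π, hπ, rfl⟩
    · have hπn : π n = n := le_antisymm (heq ▸ hv) (le_apply_of_mem_Inc1 hπ n)
      have himage : u.image π = u := by
        refine (image_congr fun j hj => ?_).trans image_id
        exact apply_eq_self_of_mem_Inc1 hπ hπn (heq ▸ le_sup (f := id) hj)
      rw [himage]
      exact Or.inr ⟨hu, heq⟩
  · rintro (⟨u, hu, π, hπ, rfl⟩ | ⟨hv, hvn⟩)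
    · refine ⟨⟨u, hu.1, π, hπ, rfl⟩, ?_⟩
      rw [sup_image_of_mem_Inc1 hπ (hA u hu.1).1]
      exact (hπ.2 _).trans hu.2
    · exact ⟨mem_incFinset.1 (subset_incFinset A hv), hvn.le⟩

lemma filter_incFinset_not_sup_le :
    (incFinset A).filter (fun v => ¬ v.sup id ≤ n) =
      (incFinset (topLink A n)).image (insert (n + 1)) := by
  ext v
  simp only [mem_filter, mem_image, mem_incFinset, not_le]
  constructor
  · rintro ⟨⟨u, hu, π, hπ, rfl⟩, hv⟩
    obtain ⟨hu₀, hun⟩ := hA u hu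
    rw [sup_image_of_mem_Inc1 hπ hu₀] at hv
    have := hπ.2 (u.sup id)
    have htop : u.sup id = n := by omega
    have hn : n ∈ u := htop ▸ sup_id_mem hu₀
    refine ⟨(u.erase n).image π,
      ⟨u.erase n, mem_image_of_mem _ (mem_filter.2 ⟨hu, htop⟩), π, hπ, rfl⟩, ?_⟩
    conv_rhs => rw [← insert_erase hn]
    rw [image_insert, show π n = n + 1 by rw [← htop]; omega]
  · rintro ⟨_, ⟨_, hw, π, hπ, rfl⟩, rfl⟩
    obtain ⟨u, hu, rfl⟩ := mem_image.1 hw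
    rw [mem_filter] at hu
    have hn : n ∈ u := hu.2 ▸ sup_id_mem (hA u hu.1).1
    have hπ' := extend_mem_Inc1 hπ n
    refine ⟨⟨u, hu.1, _, hπ', ?_⟩, ?_⟩
    · conv_rhs => rw [← insert_erase hn]
      rw [image_insert, if_neg (lt_irrefl n)]
      refine congrArg _ (image_congr fun j hj => ?_)
      simp [lt_of_mem_topLink hw j hj]
    · rw [sup_insert]
      exact (Nat.lt_succ_self n).trans_le le_sup_left

lemma card_incFinset_eq :
    #(incFinset A) = #((incFinset A).filter (·.sup id ≤ n)) + #(incFinset (topLink A n)) := by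
  rw [← card_filter_add_card_filter_not (s := incFinset A) (·.sup id ≤ n),
    filter_incFinset_not_sup_le hA, card_image_of_injOn]
  intro w₁ hw₁ w₂ hw₂ h
  have hlt : ∀ w ∈ topLink A n, ∀ j ∈ w, j < n := fun w hw => lt_of_mem_topLink hw
  have h₁ : n + 1 ∉ w₁ := fun hmem => by have := le_of_mem_incFinset hlt hw₁ _ hmem; omega
  have h₂ : n + 1 ∉ w₂ := fun hmem => by have := le_of_mem_incFinset hlt hw₂ _ hmem; omega
  simpa [erase_insert h₁, erase_insert h₂] using congrArg (·.erase (n + 1)) h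

end Decomposition

lemma card_of_mem_topLink {A : Finset (Finset ℕ)} {d n : ℕ} (hA : ∀ u ∈ A, #u = d + 1)
    {w : Finset ℕ} (hw : w ∈ topLink A n) : #w = d := by
  obtain ⟨u, hu, rfl⟩ := mem_image.1 hw
  obtain ⟨hu, hun⟩ := mem_filter.1 hu
  rw [card_erase_of_mem (hun ▸ sup_id_mem (card_pos.1 (by rw [hA u hu]; omega))), hA u hu,
    Nat.add_sub_cancel]

lemma topLink_subset_powersetCard {A : Finset (Finset ℕ)} {d : ℕ} (hA : ∀ u ∈ A, #u = d + 1)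
    (n : ℕ) : topLink A n ⊆ (range n).powersetCard d := fun _ hw =>
  mem_powersetCard.2
    ⟨fun x hx => mem_range.2 (lt_of_mem_topLink hw x hx), card_of_mem_topLink hA hw⟩

lemma filter_incFinset_subset_powersetCard {A : Finset (Finset ℕ)} {d : ℕ}
    (hA : ∀ u ∈ A, #u = d) (n : ℕ) :
    (incFinset A).filter (·.sup id ≤ n) ⊆ (range (n + 1)).powersetCard d := by
  intro v hv
  obtain ⟨hv, hvn⟩ := mem_filter.1 hv
  obtain ⟨u, hu, π, hπ, rfl⟩ := mem_incFinset.1 hv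
  refine mem_powersetCard.2 ⟨fun x hx => ?_, (card_image_of_mem_Inc1 hπ u).trans (hA u hu)⟩
  exact mem_range.2 (Nat.lt_succ_of_le ((le_sup (f := id) hx).trans hvn))

lemma exists_largest_top {A : Finset (Finset ℕ)} {d : ℕ} (hA : ∀ u ∈ A, #u = d + 1)
    (hne : A.Nonempty) : ∃ n, (∃ u ∈ A, u.sup id = n) ∧ ∀ u ∈ A, u.Nonempty ∧ u.sup id ≤ n := by
  obtain ⟨u₀, hu₀, hu₀n⟩ := A.exists_mem_eq_sup hne (·.sup id)
  exact ⟨_, ⟨u₀, hu₀, hu₀n.symm⟩, fun u hu =>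
    ⟨card_pos.1 (by rw [hA u hu]; omega), le_sup (f := (·.sup id)) hu⟩⟩

theorem incBound_card_le_card_incFinset (d : ℕ) {A : Finset (Finset ℕ)}
    (hA : ∀ u ∈ A, #u = d) : incBound d #A ≤ #(incFinset A) := by
  induction d generalizing A with
  | zero => exact (min_le_left _ _).trans (card_le_card (subset_incFinset A))
  | succ d ih =>
    induction A using Finset.strongInduction with
    | H A ihA =>
    rcases A.eq_empty_or_nonempty with rfl | hne
    · simp
    obtain ⟨n, ⟨u₀, hu₀, hu₀n⟩, hA'⟩ := exists_largest_top hA hne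
    set A' := A.filter (·.sup id < n)
    have hlow : incBound (d + 1) #A' ≤ #(incFinset A') :=
      ihA A' (filter_ssubset.2 ⟨u₀, hu₀, by simp [hu₀n]⟩) fun u hu => hA u (mem_filter.1 hu).1
    have hlink : incBound d #(topLink A n) ≤ #(incFinset (topLink A n)) :=
      ih fun _ hw => card_of_mem_topLink hA hw
    have hA_sub : A ⊆ incFinset A' ∪ A.filter (·.sup id = n) := fun u hu =>
      mem_union.2 <| (hA' u hu).2.lt_or_eq.imp
        (fun h => subset_incFinset A' (mem_filter.2 ⟨hu, h⟩)) (fun h => mem_filter.2 ⟨hu, h⟩)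
    have hmax : max #(incFinset A') #A ≤ #((incFinset A).filter (·.sup id ≤ n)) := by
      rw [filter_incFinset_sup_le hA']
      exact max_le (card_le_card subset_union_left) (card_le_card hA_sub)
    have hcore := incBound_add_le_max d #A' #(topLink A n)
    rw [← card_eq_card_filter_add_card_topLink hA'] at hcore
    rw [card_incFinset_eq hA']
    omega

lemma toColex_le_of_forall_lt {u v : Finset ℕ} {n : ℕ} (hn : n ∈ u) (hv : ∀ x ∈ v, x < n) :
    toColex v ≤ toColex u :=
  (Colex.toColex_lt_toColex_iff_exists_forall_lt.2
    ⟨n, hn, fun h => (hv n h).false, fun b hb _ => hv b hb⟩).le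

lemma filter_sup_lt_eq_powersetCard {A : Finset (Finset ℕ)} {d n : ℕ} (hA : ∀ u ∈ A, #u = d + 1)
    (hcomp : ∀ u ∈ A, ∀ v : Finset ℕ, #v = d + 1 → toColex v ≤ toColex u → v ∈ A)
    {u₀ : Finset ℕ} (hu₀ : u₀ ∈ A) (hn : n ∈ u₀) :
    A.filter (·.sup id < n) = (range n).powersetCard (d + 1) := by
  ext v
  simp only [mem_filter, mem_powersetCard]
  constructor
  · rintro ⟨hv, hvn⟩
    exact ⟨fun x hx => mem_range.2 ((le_sup (f := id) hx).trans_lt hvn), hA v hv⟩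
  · rintro ⟨hvn, hvd⟩
    have hv : ∀ x ∈ v, x < n := fun x hx => mem_range.1 (hvn hx)
    exact ⟨hcomp u₀ hu₀ v hvd (toColex_le_of_forall_lt hn hv),
      hv _ (sup_id_mem (card_pos.1 (by omega)))⟩

lemma mem_topLink_of_toColex_le {A : Finset (Finset ℕ)} {d n : ℕ} (hne : ∀ u ∈ A, u.Nonempty)
    (hcomp : ∀ u ∈ A, ∀ v : Finset ℕ, #v = d + 1 → toColex v ≤ toColex u → v ∈ A)
    {w : Finset ℕ} (hw : w ∈ topLink A n) {v : Finset ℕ} (hvd : #v = d)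
    (hvw : toColex v ≤ toColex w) : v ∈ topLink A n := by
  have hv : ∀ x ∈ v, x < n := Colex.forall_lt_mono hvw (lt_of_mem_topLink hw)
  have hnv : n ∉ v := fun h => (hv n h).false
  obtain ⟨u, hu, rfl⟩ := mem_image.1 hw
  obtain ⟨hu, hun⟩ := mem_filter.1 hu
  have hnu : n ∈ u := hun ▸ sup_id_mem (hne u hu)
  have hins : toColex (insert n v) ≤ toColex u := by
    have h := Colex.toColex_sdiff_le_toColex_sdiff (singleton_subset_iff.2 (mem_insert_self n v))
      (singleton_subset_iff.2 hnu)
    rwa [insert_sdiff_of_mem _ (mem_singleton_self n), sdiff_singleton_eq_erase,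
      sdiff_singleton_eq_erase, erase_eq_of_notMem hnv, iff_true_intro hvw, true_iff] at h
  refine mem_image.2 ⟨insert n v, mem_filter.2 ⟨hcomp u hu _ ?_ hins, ?_⟩, erase_insert hnv⟩
  · rw [card_insert_of_notMem hnv, hvd]
  · rw [sup_insert]
    exact sup_eq_left.2 (Finset.sup_le fun x hx => (hv x hx).le)

theorem card_incFinset_le_incBound (d : ℕ) {A : Finset (Finset ℕ)} (hA : ∀ u ∈ A, #u = d)
    (hcomp : ∀ u ∈ A, ∀ v : Finset ℕ, #v = d → toColex v ≤ toColex u → v ∈ A) :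
    #(incFinset A) ≤ incBound d #A := by
  induction d generalizing A with
  | zero =>
    have hempty : ∀ u ∈ A, u = ∅ := fun u hu => card_eq_zero.1 (hA u hu)
    have hinc : incFinset A ⊆ A := fun v hv => by
      obtain ⟨u, hu, π, -, rfl⟩ := mem_incFinset.1 hv
      rwa [hempty u hu, image_empty, ← hempty u hu]
    have hcard : #A ≤ 1 := card_le_one.2 fun u hu v hv => (hempty u hu).trans (hempty v hv).symm
    rw [incBound_zero_left, min_eq_left hcard]
    exact card_le_card hinc
  | succ d ih =>
    rcases A.eq_empty_or_nonempty with rfl | hne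
    · simp [eq_empty_iff_forall_notMem, mem_incFinset]
    obtain ⟨n, ⟨u₀, hu₀, hu₀n⟩, hA'⟩ := exists_largest_top hA hne
    have hlow := filter_sup_lt_eq_powersetCard hA hcomp hu₀ (hu₀n ▸ sup_id_mem (hA' u₀ hu₀).1)
    have hlink_pos : 0 < #(topLink A n) :=
      card_pos.2 ⟨_, mem_image_of_mem _ (mem_filter.2 ⟨hu₀, hu₀n⟩)⟩
    have hih := ih (A := topLink A n) (fun _ hw => card_of_mem_topLink hA hw)
      fun _ hw _ hvd hvw => mem_topLink_of_toColex_le (fun u hu => (hA' u hu).1) hcomp hw hvd hvw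
    have h₁ := card_le_card (topLink_subset_powersetCard hA n)
    have h₂ := card_le_card (filter_incFinset_subset_powersetCard hA n)
    rw [card_powersetCard, card_range] at h₁ h₂
    rw [card_incFinset_eq hA', card_eq_card_filter_add_card_topLink hA', hlow, card_powersetCard,
      card_range, incBound_succ_choose_add h₁ (by omega)]
    omega

end Inc

theorem stmt0_general (d : ℕ) (F F' : Set (Finset ℕ))
    (hFfin : F.Finite)
    (hcomp : IsCompressedIn Set.univ d F)
    (hF'fin : F'.Finite) (hF'd : ∀ u ∈ F', u.card = d)
    (hcard : F'.ncard = F.ncard) :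
    (incF F).ncard ≤ (incF F').ncard := by
  obtain ⟨A, rfl⟩ := hFfin.exists_finset_coe
  obtain ⟨A', rfl⟩ := hF'fin.exists_finset_coe
  rw [Set.ncard_coe_finset, Set.ncard_coe_finset] at hcard
  rw [← Inc.coe_incFinset, ← Inc.coe_incFinset, Set.ncard_coe_finset, Set.ncard_coe_finset]
  calc (Inc.incFinset A).card
      ≤ Inc.incBound d A.card := Inc.card_incFinset_le_incBound d (fun u hu => (hcomp.1 u hu).2)
        fun u hu v hvd hvu => hcomp.2 u hu v (Set.subset_univ _) hvd hvu
    _ = Inc.incBound d A'.card := by rw [hcard]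
    _ ≤ (Inc.incFinset A').card := Inc.incBound_card_le_card_incFinset d hF'd

theorem stmt0 (d : ℕ) (hd : 1 ≤ d) (F F' : Set (Finset ℕ))
    (hFfin : F.Finite) (hFd : ∀ u ∈ F, u.card = d)
    (hcomp : IsCompressedIn Set.univ d F)
    (hF'fin : F'.Finite) (hF'd : ∀ u ∈ F', u.card = d)
    (hcard : F'.ncard = F.ncard) :
    (incF F).ncard ≤ (incF F').ncard :=
  stmt0_general d F F' hFfin hcomp hF'fin hF'd hcard
end

section
/- Let u ∈ binom(ℕ,d). Then Inc(C(u)) = C(u+1), where C(u) is the initial segment of the squashed order determined by u and u+1 = (u_1+1,…,u_d+1). -/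
open Finset Finset.Colex

/-!
A map `π ∈ Inc1` moves each point by `0` or `1`, so `π(w) ≤ w + 1` in colex: `π(w) \ (w + 1)`
consists of fixed points of `π`, and if `x` is the largest fixed point in `w` then
`x + 1 ∈ (w + 1) \ π(w)` dominates them. Conversely, if `v ≤ u + 1` and `i` is the least point missing from `v`, then
`v = piShift i (w)` where `w` is `v` with everything above `i` moved down by one; comparing
`w` with `u` reduces above `i` to comparing `v` with `u + 1`, while an element of `w \ u` below
`i` is beaten by any element of `u \ w`: one exists as `#u = #w`, and it lies above `i` because
`w ⊇ {0, …, i - 1}`.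
-/

namespace Inc1

lemma apply_eq_or_eq_succ {π : ℕ → ℕ} (hπ : π ∈ Inc1) (x : ℕ) : π x = x ∨ π x = x + 1 := by
  have := hπ.1.le_apply (x := x)
  have := hπ.2 x
  omega

lemma toColex_image_le_toColex_image_add_one {π : ℕ → ℕ} (hπ : π ∈ Inc1) (s : Finset ℕ) :
    toColex (s.image π) ≤ toColex (s.image (· + 1)) := by
  rw [toColex_le_toColex]
  rintro _ ha hna
  obtain ⟨y, hy, rfl⟩ := mem_image.1 ha
  have hyfix : π y = y := (apply_eq_or_eq_succ hπ y).resolve_right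
    fun h ↦ hna (h ▸ mem_image_of_mem _ hy)
  set fix := s.filter (fun z ↦ π z = z)
  have hyfix' : y ∈ fix := mem_filter.2 ⟨hy, hyfix⟩
  obtain ⟨hxs, hxfix⟩ := mem_filter.1 (fix.max'_mem ⟨y, hyfix'⟩)
  set x := fix.max' ⟨y, hyfix'⟩
  refine ⟨x + 1, mem_image_of_mem _ hxs, ?_, ?_⟩
  · intro hx
    obtain ⟨z, hz, hzx⟩ := mem_image.1 hx
    rcases apply_eq_or_eq_succ hπ z with h | h
    · have : z ≤ x := fix.le_max' z (mem_filter.2 ⟨hz, h⟩)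
      omega
    · rw [show z = x by omega, hxfix] at h
      omega
  · have : y ≤ x := fix.le_max' y hyfix'
    omega

end Inc1

lemma piShift_mem_Inc1 (i : ℕ) : piShift i ∈ Inc1 :=
  ⟨fun a b h ↦ by simp only [piShift]; split_ifs <;> omega,
    fun j ↦ by simp only [piShift]; split_ifs <;> omega⟩

def piUnshift (i j : ℕ) : ℕ := if j < i then j else j - 1

lemma piShift_piUnshift {i j : ℕ} (h : j ≠ i) : piShift i (piUnshift i j) = j := by
  simp only [piShift, piUnshift]
  split_ifs <;> omega

lemma injOn_piUnshift {i : ℕ} {v : Finset ℕ} (hi : i ∉ v) : Set.InjOn (piUnshift i) v := by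
  intro a ha b hb hab
  have := piShift_piUnshift (ne_of_mem_of_not_mem ha hi)
  have := piShift_piUnshift (ne_of_mem_of_not_mem hb hi)
  rw [hab] at *
  omega

lemma image_piShift_image_piUnshift {i : ℕ} {v : Finset ℕ} (hi : i ∉ v) :
    (v.image (piUnshift i)).image (piShift i) = v := by
  rw [image_image]
  exact (image_congr fun j hj ↦ piShift_piUnshift (ne_of_mem_of_not_mem hj hi)).trans
    image_id'

lemma mem_image_piUnshift {i a : ℕ} {v : Finset ℕ} (hv : range i ⊆ v) (hi : i ∉ v) :
    a ∈ v.image (piUnshift i) ↔ a < i ∨ (i ≤ a ∧ a + 1 ∈ v) := by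
  simp only [mem_image, piUnshift]
  constructor
  · rintro ⟨j, hj, rfl⟩
    split_ifs with hji
    · exact .inl hji
    · have : j ≠ i := ne_of_mem_of_not_mem hj hi
      exact .inr ⟨by omega, by rwa [Nat.sub_add_cancel (by omega)]⟩
  · rintro (ha | ⟨ha, hav⟩)
    · exact ⟨a, hv (mem_range.2 ha), if_pos ha⟩
    · exact ⟨a + 1, hav, by rw [if_neg (by omega)]; rfl⟩

lemma toColex_le_of_toColex_le_image_add_one {i : ℕ} {u v w : Finset ℕ}
    (hw : ∀ a, a ∈ w ↔ a < i ∨ (i ≤ a ∧ a + 1 ∈ v)) (hcard : #u = #w)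
    (hvu : toColex v ≤ toColex (u.image (· + 1))) : toColex w ≤ toColex u := by
  rw [toColex_le_toColex]
  intro a haw hau
  rcases (hw a).1 haw with ha | ⟨ha, hav⟩
  · have hnsub : ¬ u ⊆ w := fun h ↦ hau (eq_of_subset_of_card_le h hcard.ge ▸ haw)
    obtain ⟨b, hbu, hbw⟩ := not_subset.1 hnsub
    have : i ≤ b := by by_contra; exact hbw ((hw b).2 (.inl (by omega)))
    exact ⟨b, hbu, hbw, by omega⟩
  · obtain ⟨_, hbu', hbv, hab⟩ := toColex_le_toColex.1 hvu hav (by simpa using hau)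
    obtain ⟨b, hbu, rfl⟩ := mem_image.1 hbu'
    refine ⟨b, hbu, fun hbw ↦ ?_, by omega⟩
    rcases (hw b).1 hbw with hb | ⟨-, hb⟩
    · omega
    · exact hbv hb

theorem stmt2_general (d : ℕ) (u : Finset ℕ) (hu : u.card = d) :
    incF {v : Finset ℕ | v.card = d ∧ toColex v ≤ toColex u} =
      {v : Finset ℕ | v.card = d ∧
        toColex v ≤ toColex (u.image (· + 1))} := by
  have hsucc : StrictMono (· + 1 : ℕ → ℕ) := strictMono_id.add_const 1
  ext v
  constructor
  · rintro ⟨w, ⟨hw, hwu⟩, π, hπ, rfl⟩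
    exact ⟨(card_image_of_injective _ hπ.1.injective).trans hw,
      (Inc1.toColex_image_le_toColex_image_add_one hπ w).trans
        ((toColex_image_le_toColex_image hsucc).2 hwu)⟩
  · rintro ⟨hv, hvu⟩
    have hex : ∃ i, i ∉ v := v.exists_notMem
    have hi : Nat.find hex ∉ v := Nat.find_spec hex
    have hrange : range (Nat.find hex) ⊆ v := fun j hj ↦
      not_not.1 (Nat.find_min hex (mem_range.1 hj))
    have hw : #(v.image (piUnshift _)) = d := (card_image_of_injOn (injOn_piUnshift hi)).trans hv
    exact ⟨_, ⟨hw, toColex_le_of_toColex_le_image_add_one (fun _ ↦ mem_image_piUnshift hrange hi)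
      (hu.trans hw.symm) hvu⟩, _, piShift_mem_Inc1 _, (image_piShift_image_piUnshift hi).symm⟩

theorem stmt2 (d : ℕ) (hd : 1 ≤ d) (u : Finset ℕ) (hu : u.card = d) :
    incF {v : Finset ℕ | v.card = d ∧ toColex v ≤ toColex u} =
      {v : Finset ℕ | v.card = d ∧
        toColex v ≤ toColex (u.image (· + 1))} :=
  stmt2_general d u hu
end

section
/- Let F ⊆ binom(ℕ,d) be a finite family with d ≥ 2. Then |F| = |C^(l)(F)| = |C^(r)(F)|, and moreover C^(l)(F) ≤ F and C^(r)(F) ≤ F in the extended squashed order on finite families. -/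
/-!
Both partial compressions act slice by slice: `F` is the disjoint union over `k` of the slices
`{k} ∪ û` with `û ∈ F̂_k`, and the compression replaces each `F̂_k` by the colex initial segment of
the same size, so the slices, and hence the families, are equinumerous. For the order, look at the
colex-largest set in the symmetric difference. If it were a new set `(k, w)`, then `w` lies in the
initial segment but not in `F̂_k`, so some `v ∈ F̂_k` lies outside the segment, hence above `w`,
and `(k, v)` would be a larger set of the symmetric difference.

Initial segments have the right size because `s ↦ ∑ i ∈ s, 2 ^ i` embeds colex into `ℕ`, where
they become sets of the first `n` values (`Nat.nth`). For the right compression the segment is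
taken among all `(d-1)`-sets, but being no longer than `F̂_{d,k}` it stays below `{k}`.
-/

open Finset.Colex

lemma famLE_of_forall_exists_lt {G F : Set (Finset ℕ)} (hG : G.Finite) (hF : F.Finite)
    (h : ∀ m ∈ G, m ∉ F → ∃ m' ∈ F, m' ∉ G ∧ toColex m < toColex m') : famLE G F := by
  rcases eq_or_ne G F with hGF | hGF
  · exact Or.inl hGF
  have hfin : (symmDiff G F).Finite := (hG.union hF).subset Set.symmDiff_subset_union
  obtain ⟨m, hm, hmax⟩ := Set.exists_max_image _ toColex hfin (Set.symmDiff_nonempty.2 hGF)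
  rcases Set.mem_symmDiff.1 hm with ⟨hmG, hmF⟩ | ⟨hmF, hmG⟩
  · obtain ⟨m', hm'F, hm'G, hlt⟩ := h m hmG hmF
    exact absurd (hmax m' (Set.mem_symmDiff.2 (Or.inr ⟨hm'F, hm'G⟩))) hlt.not_ge
  · exact Or.inr ⟨m, hmF, hmG, fun w hw => hmax w (Set.mem_symmDiff.2 hw)⟩

section Slices

variable {r : ℕ → ℕ → Prop} {F : Set (Finset ℕ)} {C C' : ℕ → Set (Finset ℕ)} {k : ℕ}
  {w : Finset ℕ}

def sliceUnion (C : ℕ → Set (Finset ℕ)) : Set (Finset ℕ) :=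
  ⋃ k, {v | ∃ w ∈ C k, v = insert k w}

/-- `hat (· < ·) F k` and `hat (· > ·) F k` are the paper's `F̂_{1,k}` and `F̂_{d,k}`
(definitionally `hatL F k` and `hatR F k`). -/
def hat (r : ℕ → ℕ → Prop) (F : Set (Finset ℕ)) (k : ℕ) : Set (Finset ℕ) :=
  {w | (∀ x ∈ w, r k x) ∧ insert k w ∈ F}

lemma notMem_of_forall_rel [Std.Asymm r] (hw : ∀ x ∈ w, r k x) : k ∉ w :=
  fun hk => asymm (hw k hk) (hw k hk)

lemma insert_injective_above [Std.Asymm r] {k k' : ℕ} {w w' : Finset ℕ}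
    (hw : ∀ x ∈ w, r k x) (hw' : ∀ x ∈ w', r k' x) (h : insert k w = insert k' w') :
    k = k' ∧ w = w' := by
  have hkk' : k = k' := by
    by_contra hne
    have hk : k ∈ w' := (Finset.mem_insert.1 (h ▸ Finset.mem_insert_self k w)).resolve_left hne
    have hk' : k' ∈ w :=
      (Finset.mem_insert.1 (h ▸ Finset.mem_insert_self k' w')).resolve_left (Ne.symm hne)
    exact asymm (hw k' hk') (hw' k hk)
  subst hkk'
  refine ⟨rfl, ?_⟩
  rw [← Finset.erase_insert (notMem_of_forall_rel hw), h,
    Finset.erase_insert (notMem_of_forall_rel hw')]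

lemma insert_mem_sliceUnion_iff [Std.Asymm r]
    (hC : ∀ k, ∀ w ∈ C k, ∀ x ∈ w, r k x) (hw : ∀ x ∈ w, r k x) :
    insert k w ∈ sliceUnion C ↔ w ∈ C k := by
  refine ⟨fun h => ?_, fun h => Set.mem_iUnion.2 ⟨k, w, h, rfl⟩⟩
  obtain ⟨k', w', hw'C, heq⟩ := Set.mem_iUnion.1 h
  obtain ⟨rfl, rfl⟩ := insert_injective_above hw (hC k' w' hw'C) heq
  exact hw'C

lemma sliceUnion_hat (hkey : ∀ u ∈ F, ∃ k ∈ u, ∀ x ∈ u, x ≠ k → r k x) :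
    sliceUnion (hat r F) = F := by
  ext u
  refine ⟨fun hu => ?_, fun hu => ?_⟩
  · obtain ⟨k, w, hw, rfl⟩ := Set.mem_iUnion.1 hu
    exact hw.2
  · obtain ⟨k, hk, hmin⟩ := hkey u hu
    refine Set.mem_iUnion.2 ⟨k, u.erase k, ⟨fun x hx => ?_, ?_⟩, (Finset.insert_erase hk).symm⟩
    · exact hmin x (Finset.mem_of_mem_erase hx) (Finset.ne_of_mem_erase hx)
    · rwa [Finset.insert_erase hk]

lemma hat_finite [Std.Asymm r] (hF : F.Finite) : (hat r F k).Finite :=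
  Set.Finite.of_finite_image (hF.subset (Set.image_subset_iff.2 fun _ hw => hw.2))
    fun _ hw _ hw' h => (insert_injective_above hw.1 hw'.1 h).2

lemma nonempty_sliceUnion_equiv_sigma [Std.Asymm r]
    (hC : ∀ k, ∀ w ∈ C k, ∀ x ∈ w, r k x) : Nonempty (sliceUnion C ≃ Σ k, C k) := by
  let toUnion (p : Σ k, C k) : sliceUnion C :=
    ⟨insert p.1 p.2, Set.mem_iUnion.2 ⟨p.1, p.2, p.2.2, rfl⟩⟩
  refine ⟨(Equiv.ofBijective toUnion ⟨?_, fun u => ?_⟩).symm⟩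
  · rintro ⟨k, w, hw⟩ ⟨k', w', hw'⟩ h
    obtain ⟨rfl, rfl⟩ := insert_injective_above (hC k w hw) (hC k' w' hw')
      (congrArg Subtype.val h)
    rfl
  · obtain ⟨u, hu⟩ := u
    obtain ⟨k, w, hw, rfl⟩ := Set.mem_iUnion.1 hu
    exact ⟨⟨k, w, hw⟩, rfl⟩

lemma nonempty_sliceUnion_equiv [Std.Asymm r]
    (hC : ∀ k, ∀ w ∈ C k, ∀ x ∈ w, r k x) (hC' : ∀ k, ∀ w ∈ C' k, ∀ x ∈ w, r k x)
    (hfin : ∀ k, (C k).Finite) (hfin' : ∀ k, (C' k).Finite)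
    (hcard : ∀ k, (C k).ncard = (C' k).ncard) :
    Nonempty (sliceUnion C ≃ sliceUnion C') := by
  have slice_equiv (k : ℕ) : Nonempty (C k ≃ C' k) := by
    have := (hfin k).to_subtype
    have := (hfin' k).to_subtype
    exact Finite.card_eq.1 (hcard k)
  obtain ⟨e⟩ := nonempty_sliceUnion_equiv_sigma hC
  obtain ⟨e'⟩ := nonempty_sliceUnion_equiv_sigma hC'
  exact ⟨e.trans ((Equiv.sigmaCongrRight fun k => (slice_equiv k).some).trans e'.symm)⟩

lemma toColex_insert_lt_toColex_insert {v : Finset ℕ} (hw : k ∉ w) (hv : k ∉ v)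
    (h : toColex w < toColex v) : toColex (insert k w) < toColex (insert k v) := by
  rwa [← toColex_sdiff_lt_toColex_sdiff (u := {k}) (by simp) (by simp),
    Finset.sdiff_singleton_eq_erase, Finset.sdiff_singleton_eq_erase, Finset.erase_insert hw,
    Finset.erase_insert hv]

lemma famLE_sliceUnion [Std.Asymm r]
    (hC : ∀ k, ∀ w ∈ C k, ∀ x ∈ w, r k x) (hC' : ∀ k, ∀ w ∈ C' k, ∀ x ∈ w, r k x)
    (hfin : (sliceUnion C).Finite) (hfin' : (sliceUnion C').Finite)
    (h : ∀ k, ∀ w ∈ C k, w ∉ C' k → ∃ v ∈ C' k, v ∉ C k ∧ toColex w < toColex v) :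
    famLE (sliceUnion C) (sliceUnion C') := by
  refine famLE_of_forall_exists_lt hfin hfin' fun m hm hm' => ?_
  obtain ⟨k, w, hw, rfl⟩ := Set.mem_iUnion.1 hm
  have hw' : w ∉ C' k := fun h => hm' (Set.mem_iUnion.2 ⟨k, w, h, rfl⟩)
  obtain ⟨v, hvC', hvC, hlt⟩ := h k w hw hw'
  refine ⟨insert k v, Set.mem_iUnion.2 ⟨k, v, hvC', rfl⟩,
    fun h => hvC ((insert_mem_sliceUnion_iff hC (hC' k v hvC')).1 h), ?_⟩
  exact toColex_insert_lt_toColex_insert (notMem_of_forall_rel (hC k w hw))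
    (notMem_of_forall_rel (hC' k v hvC')) hlt

end Slices

section Compression

open scoped Classical

variable {A : Set ℕ} {e n : ℕ} {G : Set (Finset ℕ)} {w : Finset ℕ}

def binVal (s : Finset ℕ) : ℕ := ∑ i ∈ s, 2 ^ i

lemma binVal_le_binVal_iff {s t : Finset ℕ} : binVal s ≤ binVal t ↔ toColex s ≤ toColex t :=
  Finset.geomSum_le_geomSum_iff_toColex_le_toColex le_rfl

lemma binVal_lt_binVal_iff {s t : Finset ℕ} : binVal s < binVal t ↔ toColex s < toColex t :=
  Finset.geomSum_lt_geomSum_iff_toColex_lt_toColex le_rfl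

lemma binVal_injective : Function.Injective binVal := Finset.geomSum_injective le_rfl

def subsetsOfCard (A : Set ℕ) (e : ℕ) : Set (Finset ℕ) := {w | ↑w ⊆ A ∧ w.card = e}

lemma subsetsOfCard_infinite (hA : A.Infinite) (he : e ≠ 0) : (subsetsOfCard A e).Infinite := by
  intro hfin
  refine hA ((hfin.biUnion fun w _ => w.finite_toSet).subset fun a ha => ?_)
  obtain ⟨t, htA, htcard⟩ := (hA.sdiff (Set.finite_singleton a)).exists_subset_card_eq (e - 1)
  have hat : a ∉ t := fun h => (htA h).2 rfl
  refine Set.mem_biUnion (x := insert a t) ⟨?_, ?_⟩ (by simp)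
  · rw [Finset.coe_insert]
    exact Set.insert_subset ha (htA.trans Set.sdiff_subset)
  · rw [Finset.card_insert_of_notMem hat, htcard]
    omega

lemma ncard_binVal_lt (S : Set (Finset ℕ)) (N : ℕ) :
    {w | w ∈ S ∧ binVal w < N}.ncard = Nat.count (· ∈ binVal '' S) N := by
  rw [← Set.ncard_image_of_injective _ binVal_injective, Nat.count_eq_card_filter_range,
    ← Set.ncard_coe_finset]
  congr 1
  ext m
  simp only [Set.mem_image, Set.mem_ofPred_eq, Finset.coe_filter, Finset.mem_range]
  constructor
  · rintro ⟨w, ⟨hw, hlt⟩, rfl⟩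
    exact ⟨hlt, w, hw, rfl⟩
  · rintro ⟨hlt, w, hw, rfl⟩
    exact ⟨w, ⟨hw, hlt⟩, rfl⟩

lemma image_binVal_subsetsOfCard_infinite (hA : A.Infinite) (he : e ≠ 0) :
    (Set.ofPred (· ∈ binVal '' subsetsOfCard A e)).Infinite :=
  (subsetsOfCard_infinite hA he).image binVal_injective.injOn

lemma compressionIn_eq (hA : A.Infinite) (he : e ≠ 0) (n : ℕ) :
    compressionIn A e n = {v | v ∈ subsetsOfCard A e ∧
      binVal v < Nat.nth (· ∈ binVal '' subsetsOfCard A e) n} := by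
  ext v
  have hdown : {w : Finset ℕ | ↑w ⊆ A ∧ w.card = e ∧ toColex w ≤ toColex v} =
      {w | w ∈ subsetsOfCard A e ∧ binVal w < binVal v + 1} := by
    ext w
    simp only [subsetsOfCard, Set.mem_ofPred_eq, Nat.lt_succ_iff, binVal_le_binVal_iff, and_assoc]
  rw [compressionIn, Set.mem_ofPred_eq, Set.mem_ofPred_eq, hdown, ncard_binVal_lt,
    Nat.count_le_iff_le_nth (image_binVal_subsetsOfCard_infinite hA he), Nat.succ_le_iff,
    subsetsOfCard, Set.mem_ofPred_eq, and_assoc]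

lemma compressionIn_finite (hA : A.Infinite) (he : e ≠ 0) (n : ℕ) :
    (compressionIn A e n).Finite := by
  rw [compressionIn_eq hA he]
  exact ((Set.finite_Iio _).preimage binVal_injective.injOn).subset fun v hv => hv.2

lemma compressionIn_ncard (hA : A.Infinite) (he : e ≠ 0) (n : ℕ) :
    (compressionIn A e n).ncard = n := by
  rw [compressionIn_eq hA he, ncard_binVal_lt,
    Nat.count_nth_of_infinite (image_binVal_subsetsOfCard_infinite hA he)]

lemma toColex_lt_of_mem_compressionIn (hA : A.Infinite) (he : e ≠ 0) {v : Finset ℕ}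
    (hw : w ∈ compressionIn A e n) (hv : v ∈ subsetsOfCard A e) (hv' : v ∉ compressionIn A e n) :
    toColex w < toColex v := by
  rw [compressionIn_eq hA he] at hw hv'
  exact binVal_lt_binVal_iff.1 (hw.2.trans_le (not_lt.1 fun h => hv' ⟨hv, h⟩))

lemma exists_toColex_le_of_mem_compressionIn (hA : A.Infinite) (he : e ≠ 0)
    (hG : G ⊆ subsetsOfCard A e) (hw : w ∈ compressionIn A e G.ncard) :
    ∃ v ∈ G, toColex w ≤ toColex v := by
  rw [compressionIn_eq hA he] at hw
  by_contra! hlt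
  have hGsub : G ⊆ {x | x ∈ subsetsOfCard A e ∧ binVal x < binVal w} :=
    fun v hv => ⟨hG hv, binVal_lt_binVal_iff.2 (hlt v hv)⟩
  have hfin : {x | x ∈ subsetsOfCard A e ∧ binVal x < binVal w}.Finite :=
    ((Set.finite_Iio _).preimage binVal_injective.injOn).subset fun v hv => hv.2
  have hcount := Set.ncard_le_ncard hGsub hfin
  rw [ncard_binVal_lt] at hcount
  have hlt' := Nat.count_strict_mono (p := (· ∈ binVal '' subsetsOfCard A e)) ⟨w, hw.1, rfl⟩ hw.2
  rw [Nat.count_nth_of_infinite (image_binVal_subsetsOfCard_infinite hA he)] at hlt'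
  omega

lemma exists_lt_of_mem_compressionIn_of_notMem (hA : A.Infinite) (he : e ≠ 0)
    (hG : G ⊆ subsetsOfCard A e) (hw : w ∈ compressionIn A e G.ncard) (hwG : w ∉ G) :
    ∃ v ∈ G, v ∉ compressionIn A e G.ncard ∧ toColex w < toColex v := by
  have hGC : ¬ G ⊆ compressionIn A e G.ncard := fun hsub => hwG <|
    Set.eq_of_subset_of_ncard_le hsub (compressionIn_ncard hA he _).le
      (compressionIn_finite hA he _) ▸ hw
  obtain ⟨v, hvG, hvC⟩ := Set.not_subset.1 hGC
  exact ⟨v, hvG, hvC, toColex_lt_of_mem_compressionIn hA he hw (hG hvG) hvC⟩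

end Compression

section SliceCompression

variable {r : ℕ → ℕ → Prop} {d : ℕ} {F : Set (Finset ℕ)} {C : ℕ → Set (Finset ℕ)}

lemma card_of_mem_hat [Std.Asymm r] (hFd : ∀ u ∈ F, u.card = d) {k : ℕ}
    {w : Finset ℕ} (hw : w ∈ hat r F k) : w.card = d - 1 := by
  have := hFd _ hw.2
  rw [Finset.card_insert_of_notMem (notMem_of_forall_rel hw.1)] at this
  omega

lemma ncard_sliceUnion_eq_and_famLE [Std.Asymm r]
    (hkey : ∀ u ∈ F, ∃ k ∈ u, ∀ x ∈ u, x ≠ k → r k x) (hF : F.Finite)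
    (hC : ∀ k, ∀ w ∈ C k, ∀ x ∈ w, r k x) (hCfin : ∀ k, (C k).Finite)
    (hcard : ∀ k, (C k).ncard = (hat r F k).ncard)
    (hlt : ∀ k, ∀ w ∈ C k, w ∉ hat r F k → ∃ v ∈ hat r F k, v ∉ C k ∧ toColex w < toColex v) :
    (sliceUnion C).ncard = F.ncard ∧ famLE (sliceUnion C) F := by
  have hhat : ∀ k, ∀ w ∈ hat r F k, ∀ x ∈ w, r k x := fun _ _ hw => hw.1
  obtain ⟨e⟩ := nonempty_sliceUnion_equiv hC hhat hCfin (fun _ => hat_finite hF) hcard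
  rw [sliceUnion_hat hkey] at e
  have hfin : (sliceUnion C).Finite := by
    have := hF.to_subtype
    exact Set.finite_coe_iff.1 (Finite.of_equiv _ e.symm)
  refine ⟨Set.ncard_congr' e, ?_⟩
  have := famLE_sliceUnion hC hhat hfin (by rwa [sliceUnion_hat hkey]) hlt
  rwa [sliceUnion_hat hkey] at this

lemma leftComp_ncard_eq_and_famLE (hd : 2 ≤ d) (hF : F.Finite) (hFd : ∀ u ∈ F, u.card = d) :
    (leftComp d F).ncard = F.ncard ∧ famLE (leftComp d F) F := by
  have he : d - 1 ≠ 0 := by omega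
  have hhat (k : ℕ) : hatL F k ⊆ subsetsOfCard {j | k < j} (d - 1) :=
    fun w hw => ⟨hw.1, card_of_mem_hat (r := (· < ·)) hFd hw⟩
  refine ncard_sliceUnion_eq_and_famLE (r := (· < ·)) (fun u hu => ?_) hF (fun k w hw => hw.1)
    (fun k => compressionIn_finite (Set.Ioi_infinite k) he _)
    (fun k => compressionIn_ncard (Set.Ioi_infinite k) he _)
    (fun k w hw hwG => exists_lt_of_mem_compressionIn_of_notMem (Set.Ioi_infinite k) he (hhat k)
      hw hwG)
  have hne : u.Nonempty := Finset.card_pos.1 (by rw [hFd u hu]; omega)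
  exact ⟨u.min' hne, u.min'_mem hne, fun x hx hxk => (u.min'_le x hx).lt_of_ne' hxk⟩

lemma rightComp_ncard_eq_and_famLE (hd : 2 ≤ d) (hF : F.Finite) (hFd : ∀ u ∈ F, u.card = d) :
    (rightComp d F).ncard = F.ncard ∧ famLE (rightComp d F) F := by
  have he : d - 1 ≠ 0 := by omega
  have hhat (k : ℕ) : hatR F k ⊆ subsetsOfCard Set.univ (d - 1) :=
    fun w hw => ⟨Set.subset_univ _, card_of_mem_hat (r := (· > ·)) hFd hw⟩
  have hC (k : ℕ) : ∀ w ∈ compressionIn Set.univ (d - 1) (hatR F k).ncard, ∀ x ∈ w, x < k := by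
    intro w hw
    obtain ⟨v, hv, hwv⟩ :=
      exists_toColex_le_of_mem_compressionIn Set.infinite_univ he (hhat k) hw
    exact toColex_lt_singleton.1 (hwv.trans_lt (toColex_lt_singleton.2 hv.1))
  refine ncard_sliceUnion_eq_and_famLE (r := (· > ·)) (fun u hu => ?_) hF hC
    (fun k => compressionIn_finite Set.infinite_univ he _)
    (fun k => compressionIn_ncard Set.infinite_univ he _)
    (fun k w hw hwG => exists_lt_of_mem_compressionIn_of_notMem Set.infinite_univ he (hhat k)
      hw hwG)
  have hne : u.Nonempty := Finset.card_pos.1 (by rw [hFd u hu]; omega)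
  exact ⟨u.max' hne, u.max'_mem hne, fun x hx hxk => (u.le_max' x hx).lt_of_ne hxk⟩

end SliceCompression

theorem stmt7 (d : ℕ) (hd : 2 ≤ d) (F : Set (Finset ℕ)) (hFfin : F.Finite)
    (hFd : ∀ u ∈ F, u.card = d) :
    (leftComp d F).ncard = F.ncard ∧ (rightComp d F).ncard = F.ncard ∧
      famLE (leftComp d F) F ∧ famLE (rightComp d F) F := by
  obtain ⟨hleft_card, hleft_le⟩ := leftComp_ncard_eq_and_famLE hd hFfin hFd
  obtain ⟨hright_card, hright_le⟩ := rightComp_ncard_eq_and_famLE hd hFfin hFd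
  exact ⟨hleft_card, hright_card, hleft_le, hright_le⟩
end

section
/- Let d ≥ 2 and let F ⊆ binom(ℕ,d) be a finite family. If F is both left-compressed and right-compressed, then F is shifted. -/
/-! Let `v ≤_B u` in `F`, with minima `a ≤ b`. Right compression at `max u` lets us replace `b` by
`a`, so `{a} ∪ (u \ {b}) ∈ F`. The tail of `v` is Borel-, hence colex-, below the tail of `u`, so
left compression at `a` gives `v ∈ F`. The first step needs `d ≥ 2`, so that `max u ≠ b`. -/

open Finset

lemma Finset.Nonempty.exists_eq_insert_lt {α : Type*} [LinearOrder α] {u : Finset α}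
    (hu : u.Nonempty) : ∃ b t, (∀ x ∈ t, b < x) ∧ u = insert b t :=
  ⟨u.min' hu, u.erase (u.min' hu), fun _ => u.min'_lt_of_mem_erase_min' hu,
    (insert_erase (u.min'_mem hu)).symm⟩

lemma toColex_insert_le_insert {α : Type*} [LinearOrder α] {a b : α} {s t : Finset α}
    (hab : a ≤ b) (hbt : ∀ x ∈ t, b < x) (hst : toColex s ≤ toColex t) :
    toColex (insert a s) ≤ toColex (insert b t) := by
  rw [Colex.toColex_le_toColex] at hst ⊢
  have lift : ∀ x ∈ s, x ∉ t → ∃ y ∈ insert b t, y ∉ insert a s ∧ x ≤ y := fun x hx hxt => by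
    obtain ⟨y, hyt, hys, hxy⟩ := hst hx hxt
    have hya : y ≠ a := (hab.trans_lt (hbt y hyt)).ne'
    exact ⟨y, mem_insert_of_mem hyt, by simp [hys, hya], hxy⟩
  intro x hx hxt
  rw [mem_insert, not_or] at hxt
  rcases mem_insert.1 hx with rfl | hx
  · by_cases hbs : b ∈ s
    · obtain ⟨y, hy, hys, hby⟩ := lift b hbs fun h => lt_irrefl b (hbt b h)
      exact ⟨y, hy, hys, hab.trans hby⟩
    · exact ⟨b, mem_insert_self _ _, by simp [hbs, Ne.symm hxt.1], hab⟩
  · exact lift x hx hxt.2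

lemma borelLE_insert_insert_iff {a b : ℕ} {s t : Finset ℕ} (has : ∀ x ∈ s, a < x)
    (hbt : ∀ x ∈ t, b < x) : BorelLE (insert a s) (insert b t) ↔ a ≤ b ∧ BorelLE s t := by
  rw [BorelLE, sort_insert _ (fun x hx => (has x hx).le) fun h => lt_irrefl a (has a h),
    sort_insert _ (fun x hx => (hbt x hx).le) fun h => lt_irrefl b (hbt b h), List.forall₂_cons]
  rfl

lemma BorelLE.card_eq {s t : Finset ℕ} (h : BorelLE s t) : s.card = t.card := by
  simpa using h.length_eq

lemma BorelLE.toColex_le {s t : Finset ℕ} (h : BorelLE s t) : toColex s ≤ toColex t := by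
  induction s using Finset.induction_on_min generalizing t with
  | empty => rw [card_eq_zero.1 (h.card_eq.symm.trans card_empty)]
  | insert a s has ih =>
    have ht : t.Nonempty := card_pos.1 (h.card_eq ▸ card_pos.2 (insert_nonempty a s))
    obtain ⟨b, t, hbt, rfl⟩ := ht.exists_eq_insert_lt
    obtain ⟨hab, hst⟩ := (borelLE_insert_insert_iff has hbt).1 h
    exact toColex_insert_le_insert hab hbt (ih hst)

section Compressed

variable {d : ℕ} {F : Set (Finset ℕ)}

lemma insert_mem_of_leftCompressed (hl : ∀ k : ℕ, IsCompressedIn {j | k < j} (d - 1) (hatL F k))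
    {k : ℕ} {s t : Finset ℕ} (hkt : ∀ x ∈ t, k < x) (hF : insert k t ∈ F) (hks : ∀ x ∈ s, k < x)
    (hs : s.card = d - 1) (hst : toColex s ≤ toColex t) : insert k s ∈ F :=
  ((hl k).2 t ⟨hkt, hF⟩ s hks hs hst).2

lemma insert_mem_of_rightCompressed (hr : ∀ k : ℕ, IsCompressedIn Set.univ (d - 1) (hatR F k))
    {k : ℕ} {s t : Finset ℕ} (htk : ∀ x ∈ t, x < k) (hF : insert k t ∈ F)
    (hs : s.card = d - 1) (hst : toColex s ≤ toColex t) : insert k s ∈ F :=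
  ((hr k).2 t ⟨htk, hF⟩ s (Set.subset_univ _) hs hst).2

lemma insert_mem_of_le_of_rightCompressed
    (hr : ∀ k : ℕ, IsCompressedIn Set.univ (d - 1) (hatR F k)) {a b : ℕ} {t : Finset ℕ}
    (hbt : ∀ x ∈ t, b < x) (ht : t.Nonempty) (htd : t.card = d - 1) (hF : insert b t ∈ F)
    (hab : a ≤ b) : insert a t ∈ F := by
  obtain ⟨r, c, hrc, rfl⟩ : ∃ r c, (∀ x ∈ r, x < c) ∧ t = insert c r :=
    ⟨t.erase (t.max' ht), t.max' ht, fun _ => t.lt_max'_of_mem_erase_max' ht,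
      (insert_erase (t.max'_mem ht)).symm⟩
  have hbc : b < c := hbt c (mem_insert_self c r)
  have hbr : b ∉ r := fun h => lt_irrefl b (hbt b (mem_insert_of_mem h))
  have har : a ∉ r := fun h => (hab.trans_lt (hbt a (mem_insert_of_mem h))).false
  have hcr : c ∉ r := fun h => lt_irrefl c (hrc c h)
  rw [insert_comm] at hF ⊢
  refine insert_mem_of_rightCompressed hr (t := insert b r) ?_ hF ?_
    ((Colex.insert_le_insert har hbr).2 hab)
  · intro x hx
    rcases mem_insert.1 hx with rfl | hx
    exacts [hbc, hrc x hx]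
  · rwa [card_insert_of_notMem har, ← card_insert_of_notMem hcr]

end Compressed

theorem stmt8_general (d : ℕ) (hd : 2 ≤ d) (F : Set (Finset ℕ))
    (hFd : ∀ u ∈ F, u.card = d)
    (hl : ∀ k : ℕ, IsCompressedIn {j | k < j} (d - 1) (hatL F k))
    (hr : ∀ k : ℕ, IsCompressedIn Set.univ (d - 1) (hatR F k)) :
    IsShifted F := by
  intro u hu v huv
  have hu_card := hFd u hu
  have hv_card : v.card = d := huv.card_eq.trans hu_card
  obtain ⟨b, t, hbt, rfl⟩ := (card_pos.1 (by omega : 0 < u.card)).exists_eq_insert_lt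
  obtain ⟨a, s, has, rfl⟩ := (card_pos.1 (by omega : 0 < v.card)).exists_eq_insert_lt
  obtain ⟨hab, hst⟩ := (borelLE_insert_insert_iff has hbt).1 huv
  rw [card_insert_of_notMem fun h => lt_irrefl b (hbt b h)] at hu_card
  rw [card_insert_of_notMem fun h => lt_irrefl a (has a h)] at hv_card
  have hw : insert a t ∈ F :=
    insert_mem_of_le_of_rightCompressed hr hbt (card_pos.1 (by omega)) (by omega) hu hab
  exact insert_mem_of_leftCompressed hl (fun x hx => hab.trans_lt (hbt x hx)) hw has (by omega)
    hst.toColex_le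

theorem stmt8 (d : ℕ) (hd : 2 ≤ d) (F : Set (Finset ℕ)) (hFfin : F.Finite)
    (hFd : ∀ u ∈ F, u.card = d)
    (hl : ∀ k : ℕ, IsCompressedIn {j | k < j} (d - 1) (hatL F k))
    (hr : ∀ k : ℕ, IsCompressedIn Set.univ (d - 1) (hatR F k)) :
    IsShifted F :=
  stmt8_general d hd F hFd hl hr
end

section
/- If Δ is a simplicial complex (a collection of finite subsets of ℕ closed under taking subsets, with finitely many faces), then Inc(Δ) is also a simplicial complex. -/
/-
Each π ∈ Inc₁ moves every j to j or j + 1, so π(u) ⊆ u ∪ (u + 1): a face of Δ has only finitely many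
images, whence Inc(Δ) is finite. A subset of π(u) is π(w) for the subset w ⊆ u of its preimages,
and w ∈ Δ by closure, so Inc(Δ) is closed under inclusion.
-/

lemma apply_eq_or_eq_succ_of_mem_Inc1 {π : ℕ → ℕ} (hπ : π ∈ Inc1) (j : ℕ) :
    π j = j ∨ π j = j + 1 := by
  have := hπ.1.le_apply (x := j)
  have := hπ.2 j
  omega

lemma image_subset_of_mem_Inc1 {π : ℕ → ℕ} (hπ : π ∈ Inc1) (u : Finset ℕ) :
    u.image π ⊆ u ∪ u.image (· + 1) := by
  intro x hx
  obtain ⟨j, hj, rfl⟩ := Finset.mem_image.mp hx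
  rcases apply_eq_or_eq_succ_of_mem_Inc1 hπ j with h | h <;> simp [h, hj]

lemma finite_setOf_image_Inc1 (u : Finset ℕ) : {v | ∃ π ∈ Inc1, v = u.image π}.Finite :=
  (u ∪ u.image (· + 1)).powerset.finite_toSet.subset <| by
    rintro _ ⟨π, hπ, rfl⟩
    exact Finset.mem_coe.mpr (Finset.mem_powerset.mpr (image_subset_of_mem_Inc1 hπ u))

lemma finite_incF {F : Set (Finset ℕ)} (hF : F.Finite) : (incF F).Finite := by
  have : incF F = ⋃ u ∈ F, {v | ∃ π ∈ Inc1, v = u.image π} := by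
    ext v
    simp [incF]
  rw [this]
  exact hF.biUnion fun u _ => finite_setOf_image_Inc1 u

lemma mem_incF_of_subset {F : Set (Finset ℕ)} (hF : ∀ u ∈ F, ∀ w ⊆ u, w ∈ F) {v w : Finset ℕ}
    (hv : v ∈ incF F) (hwv : w ⊆ v) : w ∈ incF F := by
  obtain ⟨u, hu, π, hπ, rfl⟩ := hv
  obtain ⟨w', hw'u, rfl⟩ := Finset.subset_image_iff.mp hwv
  exact ⟨w', hF u hu w' hw'u, π, hπ, rfl⟩

theorem stmt15 (Δ : Set (Finset ℕ)) (h : IsSimplicialComplex Δ) :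
    IsSimplicialComplex (incF Δ) :=
  ⟨finite_incF h.1, fun _ hv _ hwv => mem_incF_of_subset h.2 hv hwv⟩
end
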